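/- arXiv:1207.3072 — 8 statements merged into one kernel-verified Lean document; each statement's English description precedes it below -/
import Mathlib

section
/- Let ⟨·,·⟩ be an ad-invariant inner product on a finite-dimensional real Lie algebra g and let (ξ, η, φ) be a normal almost contact metric structure on (g, ⟨·,·⟩) with fundamental 2-form F. Then the torsion 3-form of the associated Sasaki-with-torsion structure equals the negative of the Cartan 3-form: (η ∧ dη)(X,Y,Z) + dF(φX, φY, φZ) = −⟨[X,Y], Z⟩ for all X, Y, Z ∈ g. (This expresses that the unique almost contact metric connection with totally skew-symmetric torsion on the corresponding Lie group is the canonical flat connection.) -/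
/-!
Normality gives `[φX, φY] = φ[φX, Y] + φ[X, φY] + [X, Y]`. Pairing with `Z` and moving `φ`
across both the (skew-adjoint) `φ` and the bracket by ad-invariance turns the two `φ`-terms
into `⟨[φX, φZ], Y⟩ - ⟨[φY, φZ], X⟩`, so the cyclic sum defining `dF(φX, φY, φZ)` collapses
to `-⟨[X, Y], Z⟩` up to `η`-components, which are exactly cancelled by `η ∧ dη`.
-/

section AlmostContactMetric

variable {K M : Type*} [CommRing K] [AddCommGroup M] [Module K M]
  {B : M →ₗ[K] M →ₗ[K] K} {ξ : M} {φ : M →ₗ[K] M}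

theorem eta_apply_phi_eq_zero (hξ : B ξ ξ = 1) (hφξ : φ ξ = 0)
    (hφ2 : ∀ X, φ (φ X) = -X + B ξ X • ξ) (W : M) : B ξ (φ W) = 0 := by
  have hφ3 : φ (φ (φ W)) = -φ W := by
    rw [hφ2 W, map_add, map_neg, map_smul, hφξ, smul_zero, add_zero]
  have hsmul : B ξ (φ W) • ξ = 0 := add_eq_left.mp ((hφ2 (φ W)).symm.trans hφ3)
  simpa [hξ] using congrArg (B ξ) hsmul

theorem phi_skew_adjoint (hsymm : ∀ X Y, B X Y = B Y X) (hξ : B ξ ξ = 1) (hφξ : φ ξ = 0)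
    (hφ2 : ∀ X, φ (φ X) = -X + B ξ X • ξ) (hφB : ∀ X Y, B (φ X) (φ Y) = B X Y - B ξ X * B ξ Y)
    (X Y : M) : B (φ X) Y = -B X (φ Y) := by
  have hηφ := eta_apply_phi_eq_zero hξ hφξ hφ2
  have h := hφB X (φ Y)
  rw [hφ2 Y, hηφ, mul_zero, sub_zero, map_add, map_neg, map_smul, smul_eq_mul,
    hsymm (φ X) ξ, hηφ, mul_zero, add_zero] at h
  linear_combination -h

end AlmostContactMetric

section Normal

variable {K L : Type*} [CommRing K] [LieRing L] [LieAlgebra K L]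
  {B : L →ₗ[K] L →ₗ[K] K} {ξ : L} {φ : L →ₗ[K] L}

theorem lie_phi_phi_of_normal (hφ2 : ∀ X, φ (φ X) = -X + B ξ X • ξ)
    (hnormal : ∀ X Y, ⁅φ X, φ Y⁆ + φ (φ ⁅X, Y⁆) - φ ⁅φ X, Y⁆ - φ ⁅X, φ Y⁆ - B ξ ⁅X, Y⁆ • ξ = 0)
    (X Y : L) : ⁅φ X, φ Y⁆ = φ ⁅φ X, Y⁆ + φ ⁅X, φ Y⁆ + ⁅X, Y⁆ := by
  have h := hnormal X Y
  rw [hφ2 ⁅X, Y⁆] at h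
  rw [← sub_eq_zero, ← h]
  abel

theorem eta_lie_phi_phi_of_normal (hξ : B ξ ξ = 1) (hφξ : φ ξ = 0)
    (hφ2 : ∀ X, φ (φ X) = -X + B ξ X • ξ)
    (hnormal : ∀ X Y, ⁅φ X, φ Y⁆ + φ (φ ⁅X, Y⁆) - φ ⁅φ X, Y⁆ - φ ⁅X, φ Y⁆ - B ξ ⁅X, Y⁆ • ξ = 0)
    (X Y : L) : B ξ ⁅φ X, φ Y⁆ = B ξ ⁅X, Y⁆ := by
  have h := congrArg (B ξ) (hnormal X Y)
  simp only [map_add, map_sub, map_smul, smul_eq_mul, eta_apply_phi_eq_zero hξ hφξ hφ2, hξ,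
    mul_one, map_zero] at h
  linear_combination h

theorem apply_lie_phi_phi_of_normal_of_adInvariant (hsymm : ∀ X Y, B X Y = B Y X)
    (hinv : ∀ X Y Z : L, B ⁅X, Y⁆ Z + B Y ⁅X, Z⁆ = 0) (hξ : B ξ ξ = 1) (hφξ : φ ξ = 0)
    (hφ2 : ∀ X, φ (φ X) = -X + B ξ X • ξ) (hφB : ∀ X Y, B (φ X) (φ Y) = B X Y - B ξ X * B ξ Y)
    (hnormal : ∀ X Y, ⁅φ X, φ Y⁆ + φ (φ ⁅X, Y⁆) - φ ⁅φ X, Y⁆ - φ ⁅X, φ Y⁆ - B ξ ⁅X, Y⁆ • ξ = 0)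
    (X Y Z : L) :
    B ⁅φ X, φ Y⁆ Z = B ⁅X, Y⁆ Z + B ⁅φ X, φ Z⁆ Y - B ⁅φ Y, φ Z⁆ X := by
  have hskew := phi_skew_adjoint hsymm hξ hφξ hφ2 hφB
  have hleft : B (φ ⁅φ X, Y⁆) Z = B ⁅φ X, φ Z⁆ Y := by
    rw [hskew, hsymm ⁅φ X, φ Z⁆ Y]
    linear_combination -hinv (φ X) Y (φ Z)
  have hright : B (φ ⁅X, φ Y⁆) Z = -B ⁅φ Y, φ Z⁆ X := by
    rw [hskew, ← lie_skew X (φ Y), map_neg, LinearMap.neg_apply, hsymm ⁅φ Y, φ Z⁆ X]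
    linear_combination hinv (φ Y) X (φ Z)
  rw [lie_phi_phi_of_normal hφ2 hnormal X Y, map_add, map_add, LinearMap.add_apply,
    LinearMap.add_apply, hleft, hright]
  ring

end Normal

theorem stmt_1_general (g : Type*) [LieRing g] [LieAlgebra ℝ g]
    (B : g →ₗ[ℝ] g →ₗ[ℝ] ℝ)
    (hsymm : ∀ X Y : g, B X Y = B Y X)
    (hinv : ∀ X Y Z : g, B ⁅X, Y⁆ Z + B Y ⁅X, Z⁆ = 0)
    (ξ : g) (φ : g →ₗ[ℝ] g)
    (hξ : B ξ ξ = 1) (hφξ : φ ξ = 0)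
    (hφ2 : ∀ X : g, φ (φ X) = -X + (B ξ X) • ξ)
    (hφB : ∀ X Y : g, B (φ X) (φ Y) = B X Y - B ξ X * B ξ Y)
    (hnormal : ∀ X Y : g,
      ⁅φ X, φ Y⁆ + φ (φ ⁅X, Y⁆) - φ ⁅φ X, Y⁆ - φ ⁅X, φ Y⁆ - (B ξ ⁅X, Y⁆) • ξ = 0) :
    ∀ X Y Z : g,
      (B ξ X * -(B ξ ⁅Y, Z⁆) - B ξ Y * -(B ξ ⁅X, Z⁆) + B ξ Z * -(B ξ ⁅X, Y⁆))
        + (-(B (φ ⁅φ X, φ Y⁆) (φ Z)) + B (φ ⁅φ X, φ Z⁆) (φ Y) - B (φ ⁅φ Y, φ Z⁆) (φ X))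
      = -(B ⁅X, Y⁆ Z) := by
  intro X Y Z
  have hφ_lie (U V W : g) : B (φ ⁅φ U, φ V⁆) (φ W) = B ⁅φ U, φ V⁆ W - B ξ ⁅U, V⁆ * B ξ W := by
    rw [hφB, eta_lie_phi_phi_of_normal hξ hφξ hφ2 hnormal]
  rw [hφ_lie, hφ_lie, hφ_lie,
    apply_lie_phi_phi_of_normal_of_adInvariant hsymm hinv hξ hφξ hφ2 hφB hnormal X Y Z]
  ring

/-- On a Lie algebra with ad-invariant inner product and a normal almost contact
metric structure, the torsion 3-form `η∧dη + d^φF` equals the negative of the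
Cartan 3-form. -/
theorem stmt_1 (g : Type*) [LieRing g] [LieAlgebra ℝ g] [Module.Finite ℝ g]
    (B : g →ₗ[ℝ] g →ₗ[ℝ] ℝ)
    (hpos : ∀ X : g, X ≠ 0 → 0 < B X X) (hsymm : ∀ X Y : g, B X Y = B Y X)
    (hinv : ∀ X Y Z : g, B ⁅X, Y⁆ Z + B Y ⁅X, Z⁆ = 0)
    (ξ : g) (φ : g →ₗ[ℝ] g)
    (hξ : B ξ ξ = 1) (hφξ : φ ξ = 0)
    (hφ2 : ∀ X : g, φ (φ X) = -X + (B ξ X) • ξ)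
    (hφB : ∀ X Y : g, B (φ X) (φ Y) = B X Y - B ξ X * B ξ Y)
    (hnormal : ∀ X Y : g,
      ⁅φ X, φ Y⁆ + φ (φ ⁅X, Y⁆) - φ ⁅φ X, Y⁆ - φ ⁅X, φ Y⁆ - (B ξ ⁅X, Y⁆) • ξ = 0) :
    ∀ X Y Z : g,
      (B ξ X * -(B ξ ⁅Y, Z⁆) - B ξ Y * -(B ξ ⁅X, Z⁆) + B ξ Z * -(B ξ ⁅X, Y⁆))
        + (-(B (φ ⁅φ X, φ Y⁆) (φ Z)) + B (φ ⁅φ X, φ Z⁆) (φ Y) - B (φ ⁅φ Y, φ Z⁆) (φ X))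
      = -(B ⁅X, Y⁆ Z) :=
  stmt_1_general g B hsymm hinv ξ φ hξ hφξ hφ2 hφB hnormal
end

section
/- Let (ξ, η, φ) be an almost contact metric structure on the finite-dimensional real inner product space (V, ⟨·,·⟩). Let β be an alternating 2-form on V with ι_ξβ = 0 and β(φX, φY) = β(X, Y) for all X, Y (i.e. β is of type (1,1)), and let γ be an alternating 3-form on V with ι_ξγ = 0 satisfying γ(X,Y,Z) = γ(φX, φY, Z) + γ(φX, Y, φZ) + γ(X, φY, φZ) for all X, Y, Z (i.e. γ is of type (2,1)+(1,2)). Then the 3-form c := η∧β + γ(φ·, φ·, φ·) is of type (2,1)+(1,2): c(X,Y,Z) = c(φX, φY, Z) + c(φX, Y, φZ) + c(X, φY, φZ) for all X, Y, Z ∈ V. (This is the pointwise statement that the torsion 3-form c = η∧dη + d^φF of a Sasaki-with-torsion manifold is of type (2,1)+(1,2) with respect to φ.) -/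
open RealInnerProductSpace

/-- The torsion 3-form `c = η∧β + γ(φ·,φ·,φ·)` of an almost contact metric
structure, where `β` is a `(1,1)`-form and `γ` a `(2,1)+(1,2)`-form, both
horizontal. -/
noncomputable def torsion3 {V : Type*} [NormedAddCommGroup V] [InnerProductSpace ℝ V]
    (ξ : V) (φ : V →ₗ[ℝ] V) (β : V [⋀^Fin 2]→ₗ[ℝ] ℝ) (γ : V [⋀^Fin 3]→ₗ[ℝ] ℝ)
    (X Y Z : V) : ℝ :=
  ⟪ξ, X⟫ * β ![Y, Z] - ⟪ξ, Y⟫ * β ![X, Z] + ⟪ξ, Z⟫ * β ![X, Y] + γ ![φ X, φ Y, φ Z]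

theorem inner_reeb_apply_eq_zero {V : Type*} [NormedAddCommGroup V] [InnerProductSpace ℝ V]
    {ξ : V} {φ : V →ₗ[ℝ] V} (hξ : ξ ≠ 0) (hφξ : φ ξ = 0)
    (hφ2 : ∀ X : V, φ (φ X) = -X + ⟪ξ, X⟫ • ξ) (X : V) : ⟪ξ, φ X⟫ = 0 := by
  have hφ3 : φ (φ (φ X)) = -φ X := by
    rw [hφ2 X, map_add, map_neg, map_smul, hφξ, smul_zero, add_zero]
  have hsmul : ⟪ξ, φ X⟫ • ξ = 0 := by
    have := hφ2 (φ X)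
    rw [hφ3] at this
    linear_combination (norm := module) -this
  exact (smul_eq_zero.mp hsmul).resolve_right hξ

theorem stmt_5_general {V : Type*} [NormedAddCommGroup V] [InnerProductSpace ℝ V]
    (ξ : V) (φ : V →ₗ[ℝ] V)
    (hξ : ⟪ξ, ξ⟫ = 1) (hφξ : φ ξ = 0)
    (hφ2 : ∀ X : V, φ (φ X) = -X + ⟪ξ, X⟫ • ξ)
    (β : V [⋀^Fin 2]→ₗ[ℝ] ℝ) (γ : V [⋀^Fin 3]→ₗ[ℝ] ℝ)
    (hβ11 : ∀ X Y : V, β ![φ X, φ Y] = β ![X, Y])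
    (hγtype : ∀ X Y Z : V,
      γ ![X, Y, Z] = γ ![φ X, φ Y, Z] + γ ![φ X, Y, φ Z] + γ ![X, φ Y, φ Z]) :
    ∀ X Y Z : V,
      torsion3 ξ φ β γ X Y Z
        = torsion3 ξ φ β γ (φ X) (φ Y) Z + torsion3 ξ φ β γ (φ X) Y (φ Z)
          + torsion3 ξ φ β γ X (φ Y) (φ Z) := by
  have hξ0 : ξ ≠ 0 := by
    rintro rfl
    simp at hξ
  have hηφ := inner_reeb_apply_eq_zero hξ0 hφξ hφ2
  intro X Y Z
  -- `η ∘ φ = 0` kills all but one `η∧β` term on each side, and `β` is `φ`-invariant;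
  -- the `γ`-parts agree by the type condition on `γ` applied to `(φX, φY, φZ)`.
  simp only [torsion3, hηφ, hβ11, zero_mul]
  rw [hγtype (φ X) (φ Y) (φ Z)]
  ring

/-- The torsion 3-form of a Sasaki-with-torsion structure is of type
`(2,1)+(1,2)` with respect to `φ` (pointwise statement). -/
theorem stmt_5 {V : Type*} [NormedAddCommGroup V] [InnerProductSpace ℝ V]
    [FiniteDimensional ℝ V]
    (ξ : V) (φ : V →ₗ[ℝ] V)
    (hξ : ⟪ξ, ξ⟫ = 1) (hφξ : φ ξ = 0)
    (hφ2 : ∀ X : V, φ (φ X) = -X + ⟪ξ, X⟫ • ξ)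
    (hφg : ∀ X Y : V, ⟪φ X, φ Y⟫ = ⟪X, Y⟫ - ⟪ξ, X⟫ * ⟪ξ, Y⟫)
    (β : V [⋀^Fin 2]→ₗ[ℝ] ℝ) (γ : V [⋀^Fin 3]→ₗ[ℝ] ℝ)
    (hβξ : ∀ Y : V, β ![ξ, Y] = 0)
    (hβ11 : ∀ X Y : V, β ![φ X, φ Y] = β ![X, Y])
    (hγξ : ∀ Y Z : V, γ ![ξ, Y, Z] = 0)
    (hγtype : ∀ X Y Z : V,
      γ ![X, Y, Z] = γ ![φ X, φ Y, Z] + γ ![φ X, Y, φ Z] + γ ![X, φ Y, φ Z]) :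
    ∀ X Y Z : V,
      torsion3 ξ φ β γ X Y Z
        = torsion3 ξ φ β γ (φ X) (φ Y) Z + torsion3 ξ φ β γ (φ X) Y (φ Z)
          + torsion3 ξ φ β γ X (φ Y) (φ Z) :=
  stmt_5_general ξ φ hξ hφξ hφ2 β γ hβ11 hγtype
end

section
/- Let (ξ, η, φ) be an almost contact metric structure on the n-dimensional real inner product space (V, ⟨·,·⟩). Let β be any alternating 2-form on V, let γ be an alternating 3-form on V with ι_ξγ = 0, and set c := η∧β + γ(φ·, φ·, φ·). Then for every orthonormal basis (e_1, …, e_n) of V and every X ∈ V: −½ Σ_{i=1}^{n} c(φ(X), e_i, φ(e_i)) = ½ Σ_{i=1}^{n} γ(X, e_i, φ(e_i)). In particular, the left-hand side does not depend on the choice of orthonormal basis. (This is the pointwise statement defining the Lee 1-form ϑ of a Sasaki-with-torsion manifold and proving the identity ϑ(X) = ½ Σ_i dF(X, E_i, φ(E_i)).) -/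
/-!
Since `η ∘ φ = 0`, only two terms of `c(φX, eᵢ, φeᵢ)` survive: `-η(eᵢ) β(φX, φeᵢ)` and
`γ(φ²X, φeᵢ, φ²eᵢ)`. As `φ² = -1 + η ⊗ ξ` and `ι_ξγ = 0`, the latter equals
`γ(X, φeᵢ, eᵢ) = -γ(X, eᵢ, φeᵢ)`, while the former sums over the basis to `-β(φX, φξ) = 0`.
-/

open RealInnerProductSpace

namespace AlternatingMap

variable {R M N : Type*} [CommRing R] [AddCommGroup M] [Module R M] [AddCommGroup N] [Module R N]

theorem map_vecCons_swap (f : M [⋀^Fin 2]→ₗ[R] N) (a b : M) : f ![a, b] = -f ![b, a] := by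
  have h : ![b, a] ∘ Equiv.swap 0 1 = ![a, b] := by
    funext j; fin_cases j <;> rfl
  rw [← f.map_swap ![b, a] (by decide : (0 : Fin 2) ≠ 1), h]

theorem map_vecCons_swap_one_two (f : M [⋀^Fin 3]→ₗ[R] N) (a b c : M) :
    f ![a, b, c] = -f ![a, c, b] := by
  have h : ![a, c, b] ∘ Equiv.swap 1 2 = ![a, b, c] := by
    funext j; fin_cases j <;> rfl
  rw [← f.map_swap ![a, c, b] (by decide : (1 : Fin 3) ≠ 2), h]

theorem map_vecCons_rotate (f : M [⋀^Fin 3]→ₗ[R] N) (a b c : M) :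
    f ![a, b, c] = f ![b, c, a] := by
  have h : ![a, b, c] ∘ finRotate 3 = ![b, c, a] := by
    funext j; fin_cases j <;> rfl
  rw [← h, f.map_perm, show Equiv.Perm.sign (finRotate 3) = 1 by decide, one_smul]

theorem curryLeft_eq_zero_of_forall (f : M [⋀^Fin 3]→ₗ[R] N) {ξ : M}
    (h : ∀ Y Z : M, f ![ξ, Y, Z] = 0) : f.curryLeft ξ = 0 := by
  ext v
  have hv : v = ![v 0, v 1] := by
    funext j; fin_cases j <;> rfl
  rw [curryLeft_apply_apply, hv]
  exact h _ _

end AlternatingMap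

theorem OrthonormalBasis.sum_inner_smul_apply {ι V W : Type*} [Fintype ι] [NormedAddCommGroup V]
    [InnerProductSpace ℝ V] [AddCommGroup W] [Module ℝ W] (b : OrthonormalBasis ι ℝ V)
    (ℓ : V →ₗ[ℝ] W) (x : V) : ∑ i, ⟪x, b i⟫ • ℓ (b i) = ℓ x := by
  conv_rhs => rw [← b.sum_repr' x]
  simp only [map_sum, map_smul, real_inner_comm]

section AlmostContact

variable {V : Type*} [NormedAddCommGroup V] [InnerProductSpace ℝ V] {ξ : V} {φ : V →ₗ[ℝ] V}

theorem inner_map_eq_zero_of_map_map (hφξ : φ ξ = 0)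
    (hφ2 : ∀ X : V, φ (φ X) = -X + ⟪ξ, X⟫ • ξ) (Y : V) : ⟪ξ, φ Y⟫ = 0 := by
  have h : ⟪ξ, φ Y⟫ • ξ = 0 := by
    have h3 := hφ2 (φ Y)
    rw [hφ2 Y, map_add, map_neg, map_smul, hφξ, smul_zero, add_zero] at h3
    simpa using h3
  rcases smul_eq_zero.mp h with h | rfl
  · exact h
  · exact inner_zero_left _

theorem map_vecCons_map_map {n : ℕ} {N : Type*} [AddCommGroup N] [Module ℝ N]
    (f : V [⋀^Fin (n + 1)]→ₗ[ℝ] N) (hf : f.curryLeft ξ = 0)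
    (hφ2 : ∀ X : V, φ (φ X) = -X + ⟪ξ, X⟫ • ξ) (x : V) (v : Fin n → V) :
    f (Matrix.vecCons (φ (φ x)) v) = -f (Matrix.vecCons x v) := by
  simp only [← AlternatingMap.curryLeft_apply_apply, hφ2, map_add, map_neg, map_smul, hf,
    smul_zero, add_zero, AlternatingMap.neg_apply]

theorem map_map_map_left_right {N : Type*} [AddCommGroup N] [Module ℝ N]
    (γ : V [⋀^Fin 3]→ₗ[ℝ] N) (hγ : γ.curryLeft ξ = 0)
    (hφ2 : ∀ X : V, φ (φ X) = -X + ⟪ξ, X⟫ • ξ) (a b c : V) :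
    γ ![φ (φ a), b, φ (φ c)] = γ ![a, b, c] := by
  rw [map_vecCons_map_map γ hγ hφ2, γ.map_vecCons_rotate, γ.map_vecCons_rotate,
    map_vecCons_map_map γ hγ hφ2, γ.map_vecCons_rotate, neg_neg]

theorem sum_inner_mul_map_map_eq_zero {ι : Type*} [Fintype ι] (hφξ : φ ξ = 0)
    (β : V [⋀^Fin 2]→ₗ[ℝ] ℝ) (e : OrthonormalBasis ι ℝ V) (p : V) :
    ∑ i, ⟪ξ, e i⟫ * β ![p, φ (e i)] = 0 := by
  have h := e.sum_inner_smul_apply (β.toMultilinearMap.toLinearMap ![0, p] 0 ∘ₗ φ) ξ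
  simp only [LinearMap.comp_apply, hφξ, map_zero, MultilinearMap.toLinearMap_apply,
    Matrix.vecCons, Fin.update_cons_zero, smul_eq_mul] at h
  simp only [β.map_vecCons_swap p, mul_neg, Finset.sum_neg_distrib, neg_eq_zero]
  exact h

theorem torsion3_map_apply_map (hφξ : φ ξ = 0) (hφ2 : ∀ X : V, φ (φ X) = -X + ⟪ξ, X⟫ • ξ)
    (β : V [⋀^Fin 2]→ₗ[ℝ] ℝ) {γ : V [⋀^Fin 3]→ₗ[ℝ] ℝ} (hγ : γ.curryLeft ξ = 0) (X Y : V) :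
    torsion3 ξ φ β γ (φ X) Y (φ Y) = -(⟪ξ, Y⟫ * β ![φ X, φ Y]) - γ ![X, Y, φ Y] := by
  rw [torsion3, inner_map_eq_zero_of_map_map hφξ hφ2, inner_map_eq_zero_of_map_map hφξ hφ2,
    map_map_map_left_right γ hγ hφ2, γ.map_vecCons_swap_one_two]
  ring

end AlmostContact

theorem stmt_6_general {V : Type*} [NormedAddCommGroup V] [InnerProductSpace ℝ V]
    (ξ : V) (φ : V →ₗ[ℝ] V)
    (hφξ : φ ξ = 0)
    (hφ2 : ∀ X : V, φ (φ X) = -X + ⟪ξ, X⟫ • ξ)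
    (β : V [⋀^Fin 2]→ₗ[ℝ] ℝ) (γ : V [⋀^Fin 3]→ₗ[ℝ] ℝ)
    (hγξ : ∀ Y Z : V, γ ![ξ, Y, Z] = 0)
    (n : ℕ) (e : OrthonormalBasis (Fin n) ℝ V) :
    ∀ X : V,
      -(1 / 2 : ℝ) * ∑ i, torsion3 ξ φ β γ (φ X) (e i) (φ (e i))
        = (1 / 2 : ℝ) * ∑ i, γ ![X, e i, φ (e i)] := by
  intro X
  have hγ := γ.curryLeft_eq_zero_of_forall hγξ
  simp only [torsion3_map_apply_map hφξ hφ2 β hγ, Finset.sum_sub_distrib, Finset.sum_neg_distrib,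
    sum_inner_mul_map_map_eq_zero hφξ β e]
  ring

/-- Pointwise definition of the Lee 1-form of a Sasaki-with-torsion manifold:
`-½ Σᵢ c(φX, eᵢ, φeᵢ) = ½ Σᵢ γ(X, eᵢ, φeᵢ)` for every orthonormal basis
`(e₁, …, eₙ)`; in particular, the left-hand side is basis independent. -/
theorem stmt_6 {V : Type*} [NormedAddCommGroup V] [InnerProductSpace ℝ V]
    [FiniteDimensional ℝ V]
    (ξ : V) (φ : V →ₗ[ℝ] V)
    (hξ : ⟪ξ, ξ⟫ = 1) (hφξ : φ ξ = 0)
    (hφ2 : ∀ X : V, φ (φ X) = -X + ⟪ξ, X⟫ • ξ)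
    (hφg : ∀ X Y : V, ⟪φ X, φ Y⟫ = ⟪X, Y⟫ - ⟪ξ, X⟫ * ⟪ξ, Y⟫)
    (β : V [⋀^Fin 2]→ₗ[ℝ] ℝ) (γ : V [⋀^Fin 3]→ₗ[ℝ] ℝ)
    (hγξ : ∀ Y Z : V, γ ![ξ, Y, Z] = 0)
    (n : ℕ) (hn : Module.finrank ℝ V = n) (e : OrthonormalBasis (Fin n) ℝ V) :
    ∀ X : V,
      -(1 / 2 : ℝ) * ∑ i, torsion3 ξ φ β γ (φ X) (e i) (φ (e i))
        = (1 / 2 : ℝ) * ∑ i, γ ![X, e i, φ (e i)] :=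
  stmt_6_general ξ φ hφξ hφ2 β γ hγξ n e
end

section
/- Let (ξ, η, φ) be an almost contact metric structure on the n-dimensional real inner product space (V, ⟨·,·⟩) with fundamental 2-form F. Then for every linear functional λ on V, every orthonormal basis (e_1, …, e_n) of V, and every X ∈ V: Σ_{i=1}^{n} (λ∧F)(X, e_i, φ(e_i)) = (n−3)·λ(X) + 2·η(X)·λ(ξ). (This contraction identity is the computational core of the transformation rule ϑ̃ = ϑ + (n−3)df for the Lee form under transversal conformal transformations, and of the 5-dimensional identity dF = ϑ∧F.) -/
/-!
Expand everything in the orthonormal basis: `Σᵢ ⟪v, eᵢ⟫ f(eᵢ) = f(v)` for any linear functional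
`f`, and `Σᵢ ⟪φeᵢ, φeᵢ⟫ = n - ‖ξ‖² = n - 1` by compatibility of `φ` with the metric. The three
terms of the contraction become `(n - 1) λ(X)`, `-(λ(X) - η(X) λ(ξ))` and `λ(φ²X) = -λ(X) + η(X) λ(ξ)`.
-/

open RealInnerProductSpace

namespace OrthonormalBasis

variable {ι V : Type*} [Fintype ι] [NormedAddCommGroup V] [InnerProductSpace ℝ V]

theorem sum_inner_mul_apply (e : OrthonormalBasis ι ℝ V) (f : V →ₗ[ℝ] ℝ) (v : V) :
    ∑ i, ⟪v, e i⟫ * f (e i) = f v := by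
  conv_rhs => rw [← e.sum_repr' v]
  simp only [map_sum, map_smul, smul_eq_mul, real_inner_comm]

theorem sum_inner_map_self_of_inner_map_map {ξ : V} {φ : V →ₗ[ℝ] V}
    (hφg : ∀ X Y : V, ⟪φ X, φ Y⟫ = ⟪X, Y⟫ - ⟪ξ, X⟫ * ⟪ξ, Y⟫) (e : OrthonormalBasis ι ℝ V) :
    ∑ i, ⟪φ (e i), φ (e i)⟫ = Fintype.card ι - ⟪ξ, ξ⟫ := by
  have hξ : ∑ i, ⟪ξ, e i⟫ * ⟪ξ, e i⟫ = ⟪ξ, ξ⟫ := by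
    simpa only [real_inner_comm ξ] using e.sum_inner_mul_inner ξ ξ
  simp only [hφg, real_inner_self_eq_norm_sq, e.orthonormal.1, Finset.sum_sub_distrib, hξ]
  simp

theorem sum_apply_mul_inner_map_of_inner_map_map {ξ : V} {φ : V →ₗ[ℝ] V}
    (hφg : ∀ X Y : V, ⟪φ X, φ Y⟫ = ⟪X, Y⟫ - ⟪ξ, X⟫ * ⟪ξ, Y⟫) (e : OrthonormalBasis ι ℝ V)
    (f : V →ₗ[ℝ] ℝ) (X : V) :
    ∑ i, f (e i) * ⟪φ X, φ (e i)⟫ = f X - ⟪ξ, X⟫ * f ξ := by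
  rw [← e.sum_inner_mul_apply f X, ← e.sum_inner_mul_apply f ξ, Finset.mul_sum,
    ← Finset.sum_sub_distrib]
  exact Finset.sum_congr rfl fun i _ => by rw [hφg]; ring

end OrthonormalBasis

theorem stmt_7_general {V : Type*} [NormedAddCommGroup V] [InnerProductSpace ℝ V]
    (ξ : V) (φ : V →ₗ[ℝ] V)
    (hξ : ⟪ξ, ξ⟫ = 1)
    (hφ2 : ∀ X : V, φ (φ X) = -X + ⟪ξ, X⟫ • ξ)
    (hφg : ∀ X Y : V, ⟪φ X, φ Y⟫ = ⟪X, Y⟫ - ⟪ξ, X⟫ * ⟪ξ, Y⟫)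
    (n : ℕ) (e : OrthonormalBasis (Fin n) ℝ V)
    (l : V →ₗ[ℝ] ℝ) (X : V) :
    ∑ i, (l X * ⟪φ (e i), φ (e i)⟫ - l (e i) * ⟪φ X, φ (e i)⟫
        + l (φ (e i)) * ⟪φ X, e i⟫)
      = ((n : ℝ) - 3) * l X + 2 * ⟪ξ, X⟫ * l ξ := by
  have hφφ : ∑ i, l (φ (e i)) * ⟪φ X, e i⟫ = l (φ (φ X)) := by
    calc _ = ∑ i, ⟪φ X, e i⟫ * (l ∘ₗ φ) (e i) := Finset.sum_congr rfl fun _ _ => mul_comm _ _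
      _ = _ := e.sum_inner_mul_apply (l ∘ₗ φ) (φ X)
  rw [Finset.sum_add_distrib, Finset.sum_sub_distrib, ← Finset.mul_sum,
    e.sum_inner_map_self_of_inner_map_map hφg, e.sum_apply_mul_inner_map_of_inner_map_map hφg,
    hφφ, hφ2, hξ, Fintype.card_fin]
  simp only [map_add, map_neg, map_smul, smul_eq_mul]
  ring

/-- Contraction identity `Σᵢ (λ∧F)(X, eᵢ, φeᵢ) = (n−3)λ(X) + 2η(X)λ(ξ)` for the
fundamental 2-form `F(X,Y) = ⟪φX, Y⟫` of an almost contact metric structure and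
any orthonormal basis `(e₁, …, eₙ)`. -/
theorem stmt_7 {V : Type*} [NormedAddCommGroup V] [InnerProductSpace ℝ V]
    [FiniteDimensional ℝ V]
    (ξ : V) (φ : V →ₗ[ℝ] V)
    (hξ : ⟪ξ, ξ⟫ = 1) (hφξ : φ ξ = 0)
    (hφ2 : ∀ X : V, φ (φ X) = -X + ⟪ξ, X⟫ • ξ)
    (hφg : ∀ X Y : V, ⟪φ X, φ Y⟫ = ⟪X, Y⟫ - ⟪ξ, X⟫ * ⟪ξ, Y⟫)
    (n : ℕ) (hn : Module.finrank ℝ V = n) (e : OrthonormalBasis (Fin n) ℝ V)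
    (l : V →ₗ[ℝ] ℝ) (X : V) :
    ∑ i, (l X * ⟪φ (e i), φ (e i)⟫ - l (e i) * ⟪φ X, φ (e i)⟫
        + l (φ (e i)) * ⟪φ X, e i⟫)
      = ((n : ℝ) - 3) * l X + 2 * ⟪ξ, X⟫ * l ξ :=
  stmt_7_general ξ φ hξ hφ2 hφg n e l X
end

section
/- Let (ξ, η, φ) be an almost contact metric structure on a 5-dimensional real inner product space (V, ⟨·,·⟩) with fundamental 2-form F, and let γ be an alternating 3-form on V with ι_ξγ = 0. Then for every orthonormal basis (e_1, …, e_5) of V, the linear functional ϑ defined by ϑ(X) := ½ Σ_{i=1}^{5} γ(X, e_i, φ(e_i)) satisfies ϑ ∧ F = γ. (This is the pointwise form of the lemma that on a 5-dimensional Sasaki-with-torsion manifold dF = ϑ∧F, where ϑ is the Lee 1-form.) -/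
/-!
Choose an orthonormal basis `(u, φu, v, φv, ξ)` adapted to the structure. The sum
`∑ᵢ γ(X, eᵢ, φeᵢ)` is the contraction of the bilinear form `γ(X, ·, φ ·)` with the canonical
tensor `∑ᵢ eᵢ ⊗ eᵢ`, so it does not depend on the orthonormal basis, and in the adapted basis
`ϑ(X) = γ(X, u, φu) + γ(X, v, φv)`. Now `ϑ ∧ F` and `γ` are alternating 3-forms, so it suffices
to compare them on increasing triples of basis vectors. Triples containing `ξ` give `0` on both
sides, and on the four triples from the 4-dimensional horizontal space both sides agree, since
`F` pairs `u` with `φu` and `v` with `φv`.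
-/

open RealInnerProductSpace

namespace AlternatingMap

variable {R M N : Type*} [CommRing R] [AddCommGroup M] [Module R M] [AddCommGroup N] [Module R N]

def toBilinMap (ω : M [⋀^Fin 2]→ₗ[R] N) : LinearMap.BilinMap R M N :=
  LinearMap.mk₂ R (fun x y => ω ![x, y])
    (fun _ _ _ => ω.map_vecCons_add _ _ _) (fun _ _ _ => ω.map_vecCons_smul _ _ _)
    (fun x _ _ => (ω.curryLeft x).map_vecCons_add _ _ _)
    (fun _ x _ => (ω.curryLeft x).map_vecCons_smul _ _ _)

@[simp]
lemma toBilinMap_apply (ω : M [⋀^Fin 2]→ₗ[R] N) (x y : M) : ω.toBilinMap x y = ω ![x, y] :=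
  rfl

lemma map_swap₂ (ω : M [⋀^Fin 2]→ₗ[R] N) (x y : M) : ω ![y, x] = -ω ![x, y] := by
  convert ω.map_swap ![x, y] (i := 0) (j := 1) (by decide) using 2
  ext i; fin_cases i <;> rfl

lemma map_rotate₃ (f : M [⋀^Fin 3]→ₗ[R] N) (x y z : M) : f ![y, z, x] = f ![x, y, z] := by
  have h := f.map_perm ![x, y, z] (finRotate 3)
  rw [sign_finRotate] at h
  convert h using 2
  · ext i; fin_cases i <;> rfl
  · simp

theorem ext_strictMono {ι : Type*} [LinearOrder ι] {n : ℕ} {f g : M [⋀^Fin n]→ₗ[R] N}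
    (e : Module.Basis ι R M) (h : ∀ v : Fin n → ι, StrictMono v → f (e ∘ v) = g (e ∘ v)) :
    f = g := by
  refine e.ext_alternating fun v hv => ?_
  set σ := Tuple.sort v
  have hσ : StrictMono (v ∘ σ) :=
    (Tuple.monotone_sort v).strictMono_of_injective (hv.comp σ.injective)
  rw [show (fun i => e (v i)) = (e ∘ v ∘ σ) ∘ σ.symm by ext; simp, f.map_perm, g.map_perm,
    h _ hσ]

end AlternatingMap

namespace LinearMap

variable {R M : Type*} [CommRing R] [AddCommGroup M] [Module R M]

def wedgeBilin (θ : M →ₗ[R] R) (β : M →ₗ[R] M →ₗ[R] R) (hβ : β.IsAlt) :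
    M [⋀^Fin 3]→ₗ[R] R where
  toFun v := θ (v 0) * β (v 1) (v 2) - θ (v 1) * β (v 0) (v 2) + θ (v 2) * β (v 0) (v 1)
  -- The field quantifies over an arbitrary `DecidableEq (Fin 3)` instance; `simp` can only
  -- evaluate `Function.update` at the canonical one.
  map_update_add' := by
    intro _ v i x y
    obtain rfl := Subsingleton.elim ‹DecidableEq (Fin 3)› (instDecidableEqFin 3)
    fin_cases i <;> simp [Function.update_of_ne] <;> ring
  map_update_smul' := by
    intro _ v i c x
    obtain rfl := Subsingleton.elim ‹DecidableEq (Fin 3)› (instDecidableEqFin 3)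
    fin_cases i <;> simp [Function.update_of_ne] <;> ring
  map_eq_zero_of_eq' v i j hv hij := by
    fin_cases i <;> fin_cases j <;>
      simp only [Fin.zero_eta, Fin.mk_one, Fin.reduceFinMk] at hv hij ⊢ <;>
      first
      | exact absurd rfl hij
      | rw [hv]
        simp only [hβ.self_eq_zero, ← hβ.neg (v 0) (v 1), ← hβ.neg (v 1) (v 2)]
        ring

@[simp]
lemma wedgeBilin_apply (θ : M →ₗ[R] R) (β : M →ₗ[R] M →ₗ[R] R) (hβ : β.IsAlt) (x y z : M) :
    θ.wedgeBilin β hβ ![x, y, z] = θ x * β y z - θ y * β x z + θ z * β x y :=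
  rfl

end LinearMap

theorem OrthonormalBasis.sum_bilin_apply_self_eq {V N ι κ : Type*} [NormedAddCommGroup V]
    [InnerProductSpace ℝ V] [FiniteDimensional ℝ V] [AddCommGroup N] [Module ℝ N] [Fintype ι]
    [Fintype κ] (B : V →ₗ[ℝ] V →ₗ[ℝ] N) (e : OrthonormalBasis ι ℝ V)
    (b : OrthonormalBasis κ ℝ V) :
    ∑ i, B (e i) (e i) = ∑ j, B (b j) (b j) := by
  simpa using congr(TensorProduct.lift B
    $((InnerProductSpace.canonicalCovariantTensor_eq_sum V e).symm.trans
      (InnerProductSpace.canonicalCovariantTensor_eq_sum V b)))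

section InnerProductSpace

variable {V : Type*} [NormedAddCommGroup V] [InnerProductSpace ℝ V]

theorem exists_forall_inner_eq_zero_of_lt_finrank [FiniteDimensional ℝ V] {n : ℕ} (x : Fin n → V)
    (hn : n < Module.finrank ℝ V) : ∃ w : V, ⟪w, w⟫ = 1 ∧ ∀ i, ⟪x i, w⟫ = 0 := by
  have hx : Submodule.span ℝ (Set.range x) ≠ ⊤ := fun hx => by
    have := finrank_range_le_card (R := ℝ) x
    rw [Set.finrank, hx, finrank_top, Fintype.card_fin] at this
    omega
  obtain ⟨w, hw, hw0⟩ :=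
    Submodule.exists_mem_ne_zero_of_ne_bot (mt Submodule.orthogonal_eq_bot_iff.mp hx)
  refine ⟨‖w‖⁻¹ • w, ?_, fun i => ?_⟩
  · rw [real_inner_self_eq_norm_sq, norm_smul, norm_inv, norm_norm,
      inv_mul_cancel₀ (norm_ne_zero_iff.mpr hw0), one_pow]
  · rw [real_inner_smul_right,
      Submodule.inner_right_of_mem_orthogonal (Submodule.subset_span (Set.mem_range_self i)) hw,
      mul_zero]

structure IsAlmostContactMetric (ξ : V) (φ : V →ₗ[ℝ] V) : Prop where
  inner_self_xi : ⟪ξ, ξ⟫ = 1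
  map_xi : φ ξ = 0
  map_map : ∀ X, φ (φ X) = -X + ⟪ξ, X⟫ • ξ
  inner_map_map : ∀ X Y, ⟪φ X, φ Y⟫ = ⟪X, Y⟫ - ⟪ξ, X⟫ * ⟪ξ, Y⟫

noncomputable def fundamentalForm (φ : V →ₗ[ℝ] V) : V →ₗ[ℝ] V →ₗ[ℝ] ℝ :=
  innerₗ V ∘ₗ φ

@[simp]
lemma fundamentalForm_apply (φ : V →ₗ[ℝ] V) (X Y : V) : fundamentalForm φ X Y = ⟪φ X, Y⟫ :=
  rfl

namespace IsAlmostContactMetric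

variable {ξ : V} {φ : V →ₗ[ℝ] V} (h : IsAlmostContactMetric ξ φ)
include h

theorem inner_xi_map (X : V) : ⟪ξ, φ X⟫ = 0 := by
  have hξ : ξ ≠ 0 := fun h0 => by simpa [h0] using h.inner_self_xi
  -- Expanding `φ (φ (φ X))` in two ways leaves `⟪ξ, φ X⟫ • ξ = 0`.
  have h3 := h.map_map (φ X)
  rw [h.map_map X, map_add, map_smul, h.map_xi, smul_zero, add_zero, map_neg,
    left_eq_add, smul_eq_zero] at h3
  exact h3.resolve_right hξ

theorem inner_map_xi (X : V) : ⟪φ X, ξ⟫ = 0 := by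
  rw [real_inner_comm, h.inner_xi_map]

theorem inner_map_left (X Y : V) : ⟪φ X, Y⟫ = -⟪X, φ Y⟫ := by
  have := h.inner_map_map X (φ Y)
  rw [h.map_map, h.inner_xi_map, mul_zero, sub_zero, inner_add_right, inner_neg_right,
    real_inner_smul_right, h.inner_map_xi, mul_zero, add_zero] at this
  linarith

theorem inner_map_self (X : V) : ⟪φ X, X⟫ = 0 := by
  have := h.inner_map_left X X
  rw [real_inner_comm (φ X) X] at this
  linarith

theorem inner_self_map (X : V) : ⟪X, φ X⟫ = 0 := by
  rw [real_inner_comm, h.inner_map_self]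

theorem fundamentalForm_isAlt : (fundamentalForm φ).IsAlt :=
  h.inner_map_self

theorem exists_adaptedBasis [FiniteDimensional ℝ V] (hdim : Module.finrank ℝ V = 5) :
    ∃ b : OrthonormalBasis (Fin 5) ℝ V,
      b 4 = ξ ∧ ∀ i, φ (b i) = ![b 1, -b 0, b 3, -b 2, 0] i := by
  obtain ⟨u, hu, hu_orth⟩ := exists_forall_inner_eq_zero_of_lt_finrank ![ξ] (by omega)
  obtain ⟨v, hv, hv_orth⟩ := exists_forall_inner_eq_zero_of_lt_finrank ![ξ, u, φ u] (by omega)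
  have hξu : ⟪ξ, u⟫ = 0 := hu_orth 0
  have hξv : ⟪ξ, v⟫ = 0 := hv_orth 0
  have huv : ⟪u, v⟫ = 0 := hv_orth 1
  have hφuv : ⟪φ u, v⟫ = 0 := hv_orth 2
  have huφv : ⟪u, φ v⟫ = 0 := by rw [← neg_eq_zero, ← h.inner_map_left, hφuv]
  set f : Fin 5 → V := ![u, φ u, v, φ v, ξ]
  have hf : Orthonormal ℝ f := by
    rw [orthonormal_iff_ite]
    intro i j
    fin_cases i <;> fin_cases j <;>
      simp [-inner_self_eq_norm_sq_to_K, f, h.inner_map_map, h.inner_xi_map, h.inner_map_xi,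
        h.inner_map_self, h.inner_self_map, h.inner_self_xi, hu, hv, hξu, hξv, huv, hφuv, huφv,
        inner_eq_zero_symm.1 hξu, inner_eq_zero_symm.1 hξv, inner_eq_zero_symm.1 huv,
        inner_eq_zero_symm.1 hφuv, inner_eq_zero_symm.1 huφv]
  let b := OrthonormalBasis.mk hf
    (hf.linearIndependent.span_eq_top_of_card_eq_finrank (by simp [hdim])).ge
  have hb : ⇑b = f := OrthonormalBasis.coe_mk _ _
  refine ⟨b, by simp [hb, f], fun i => ?_⟩
  fin_cases i <;> simp [hb, f, h.map_map, h.map_xi, hξu, hξv]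

end IsAlmostContactMetric

noncomputable def leeForm {ι : Type*} [Fintype ι] (γ : V [⋀^Fin 3]→ₗ[ℝ] ℝ) (φ : V →ₗ[ℝ] V)
    (e : OrthonormalBasis ι ℝ V) : V →ₗ[ℝ] ℝ where
  toFun X := (1 / 2 : ℝ) * ∑ i, γ ![X, e i, φ (e i)]
  map_add' X Y := by simp only [γ.map_vecCons_add, Finset.sum_add_distrib, mul_add]
  map_smul' c X := by
    simp only [γ.map_vecCons_smul, smul_eq_mul, ← Finset.mul_sum, RingHom.id_apply]
    ring

theorem leeForm_eq_leeForm [FiniteDimensional ℝ V] {ι κ : Type*} [Fintype ι] [Fintype κ]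
    (γ : V [⋀^Fin 3]→ₗ[ℝ] ℝ) (φ : V →ₗ[ℝ] V) (e : OrthonormalBasis ι ℝ V)
    (b : OrthonormalBasis κ ℝ V) :
    leeForm γ φ e = leeForm γ φ b := by
  ext X
  simpa [leeForm] using congr_arg ((1 / 2 : ℝ) * ·)
    (e.sum_bilin_apply_self_eq (((γ.curryLeft X).toBilinMap).compl₂ φ) b)

theorem leeForm_apply_of_adapted (γ : V [⋀^Fin 3]→ₗ[ℝ] ℝ) (φ : V →ₗ[ℝ] V)
    (b : OrthonormalBasis (Fin 5) ℝ V) (hφb : ∀ i, φ (b i) = ![b 1, -b 0, b 3, -b 2, 0] i)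
    (X : V) :
    leeForm γ φ b X = γ ![X, b 0, b 1] + γ ![X, b 2, b 3] := by
  have hneg : ∀ x y, γ ![X, x, -y] = γ ![X, y, x] := fun x y => by
    have h := ((γ.curryLeft X).toBilinMap x).map_neg y
    rw [AlternatingMap.toBilinMap_apply, AlternatingMap.toBilinMap_apply,
      (γ.curryLeft X).map_swap₂ y x, neg_neg] at h
    simpa using h
  have hzero : ∀ x, γ ![X, x, 0] = 0 := fun x => by
    simpa using ((γ.curryLeft X).toBilinMap x).map_zero
  simp only [leeForm, LinearMap.coe_mk, AddHom.coe_mk, Fin.sum_univ_five, hφb, Matrix.cons_val,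
    hneg, hzero]
  ring

theorem wedgeBilin_leeForm_eq_of_adapted (γ : V [⋀^Fin 3]→ₗ[ℝ] ℝ) (φ : V →ₗ[ℝ] V)
    (hF : (fundamentalForm φ).IsAlt) (b : OrthonormalBasis (Fin 5) ℝ V)
    (hφb : ∀ i, φ (b i) = ![b 1, -b 0, b 3, -b 2, 0] i) (hγ : ∀ Y Z, γ ![b 4, Y, Z] = 0) :
    (leeForm γ φ b).wedgeBilin (fundamentalForm φ) hF = γ := by
  refine AlternatingMap.ext_strictMono b.toBasis fun v hv => ?_
  have hbv : b.toBasis ∘ v = ![b (v 0), b (v 1), b (v 2)] := by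
    ext i; fin_cases i <;> simp
  have hij : v 0 < v 1 := hv (by decide)
  have hjk : v 1 < v 2 := hv (by decide)
  rw [hbv]
  generalize v 0 = i, v 1 = j, v 2 = k at hij hjk ⊢
  have hγ' : ∀ Y Z, γ ![Y, Z, b 4] = 0 := fun Y Z => by rw [γ.map_rotate₃, hγ]
  have hγ₀₁ : ∀ Y Z, γ ![Y, Y, Z] = 0 := fun Y Z =>
    γ.map_eq_zero_of_eq _ (i := 0) (j := 1) rfl (by decide)
  have hγ₀₂ : ∀ Y Z, γ ![Y, Z, Y] = 0 := fun Y Z =>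
    γ.map_eq_zero_of_eq _ (i := 0) (j := 2) rfl (by decide)
  fin_cases i <;> fin_cases j <;> fin_cases k <;>
    simp [leeForm_apply_of_adapted γ φ b hφb, hφb, b.inner_eq_ite, hγ, hγ', hγ₀₁, hγ₀₂,
      γ.map_rotate₃] at hij hjk ⊢

end InnerProductSpace

/-- In dimension 5, the Lee form `ϑ(X) = ½ Σᵢ γ(X, eᵢ, φeᵢ)` of a horizontal
3-form `γ` satisfies `ϑ ∧ F = γ`, where `F(X,Y) = ⟪φX, Y⟫` is the fundamental
2-form (pointwise form of `dF = ϑ∧F` on 5-dimensional ST manifolds). -/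
theorem stmt_8 {V : Type*} [NormedAddCommGroup V] [InnerProductSpace ℝ V]
    [FiniteDimensional ℝ V] (hdim : Module.finrank ℝ V = 5)
    (ξ : V) (φ : V →ₗ[ℝ] V)
    (hξ : ⟪ξ, ξ⟫ = 1) (hφξ : φ ξ = 0)
    (hφ2 : ∀ X : V, φ (φ X) = -X + ⟪ξ, X⟫ • ξ)
    (hφg : ∀ X Y : V, ⟪φ X, φ Y⟫ = ⟪X, Y⟫ - ⟪ξ, X⟫ * ⟪ξ, Y⟫)
    (γ : V [⋀^Fin 3]→ₗ[ℝ] ℝ)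
    (hγξ : ∀ Y Z : V, γ ![ξ, Y, Z] = 0)
    (e : OrthonormalBasis (Fin 5) ℝ V) :
    ∀ X Y Z : V,
      ((1 / 2 : ℝ) * ∑ i, γ ![X, e i, φ (e i)]) * ⟪φ Y, Z⟫
        - ((1 / 2 : ℝ) * ∑ i, γ ![Y, e i, φ (e i)]) * ⟪φ X, Z⟫
        + ((1 / 2 : ℝ) * ∑ i, γ ![Z, e i, φ (e i)]) * ⟪φ X, Y⟫
      = γ ![X, Y, Z] := by
  have h : IsAlmostContactMetric ξ φ := ⟨hξ, hφξ, hφ2, hφg⟩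
  obtain ⟨b, rfl, hφb⟩ := h.exists_adaptedBasis hdim
  have key := wedgeBilin_leeForm_eq_of_adapted γ φ h.fundamentalForm_isAlt b hφb hγξ
  rw [← leeForm_eq_leeForm γ φ e b] at key
  intro X Y Z
  simpa [leeForm] using congr($key ![X, Y, Z])
end

section
/- Let (ξ, η, φ) be an almost contact metric structure on the n-dimensional real inner product space (V, ⟨·,·⟩) with fundamental 2-form F, let t > 0, and let ⟨·,·⟩~ = t⟨·,·⟩ + (1−t)η⊗η be the transversally rescaled inner product. Let γ be an alternating 3-form on V with ι_ξγ = 0 and let λ be a linear functional on V with λ(ξ) = 0. Then for every ⟨·,·⟩~-orthonormal basis (ẽ_1, …, ẽ_n), every ⟨·,·⟩-orthonormal basis (e_1, …, e_n), and every X ∈ V: ½ Σ_{i=1}^{n} (t·γ + t·λ∧F)(X, ẽ_i, φ(ẽ_i)) = ½ Σ_{i=1}^{n} γ(X, e_i, φ(e_i)) + ((n−3)/2)·λ(X). (Taking γ = dF and λ = 2df, this is the transformation rule ϑ̃ = ϑ + (n−3)df for the Lee 1-form under a transversal conformal transformation by the basic function f.) -/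
open RealInnerProductSpace

/-!
The map `Y ↦ √t • Y + (1 - √t) η(Y) • ξ` carries `⟨·,·⟩~`-orthonormal bases to
`⟨·,·⟩`-orthonormal ones and multiplies `φ`, `λ` and the horizontal part of a vector by `√t`;
as `γ` and `λ` vanish on `ξ`, it turns each summand `t (γ + λ ∧ F)(X, ẽᵢ, φ ẽᵢ)` into
`(γ + λ ∧ F)(X, bᵢ, φ bᵢ)` for a `⟨·,·⟩`-orthonormal basis `b`. The `γ`-part is the trace of the
bilinear form `γ(X, ·, φ ·)`, hence the same for `b` and `e`, and the `λ ∧ F`-part traces to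
`(n - 1) λ(X) - λ(X) - λ(X)`.
-/

namespace AlternatingMap

variable {R M N : Type*} [CommSemiring R] [AddCommMonoid M] [Module R M]

def toBilinTail [AddCommMonoid N] [Module R N] (γ : M [⋀^Fin 3]→ₗ[R] N) (X : M) :
    M →ₗ[R] M →ₗ[R] N :=
  LinearMap.mk₂ R (fun Y Z => γ ![X, Y, Z])
    (fun Y Y' Z => show (γ.curryLeft X).curryLeft (Y + Y') ![Z] = _ by simp)
    (fun c Y Z => show (γ.curryLeft X).curryLeft (c • Y) ![Z] = _ by simp)
    (fun Y Z Z' => show ((γ.curryLeft X).curryLeft Y).curryLeft (Z + Z') ![] = _ by simp)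
    (fun c Y Z => show ((γ.curryLeft X).curryLeft Y).curryLeft (c • Z) ![] = _ by simp)

@[simp]
theorem toBilinTail_apply [AddCommMonoid N] [Module R N] (γ : M [⋀^Fin 3]→ₗ[R] N)
    (X Y Z : M) :
    γ.toBilinTail X Y Z = γ ![X, Y, Z] :=
  rfl

theorem apply_eq_neg_apply_swap [AddCommGroup N] [Module R N] (γ : M [⋀^Fin 3]→ₗ[R] N)
    (X Y Z : M) :
    γ ![X, Y, Z] = -γ ![Y, X, Z] := by
  simpa using γ.map_swap ![Y, X, Z] (i := 0) (j := 1) (by decide)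

end AlternatingMap

section InnerProductSpace

variable {V : Type*} [NormedAddCommGroup V] [InnerProductSpace ℝ V]

theorem OrthonormalBasis.sum_bilin_diag_eq {ι κ : Type*} [Fintype ι] [Fintype κ]
    (B : V →ₗ[ℝ] V →ₗ[ℝ] ℝ) (b : OrthonormalBasis ι ℝ V) (c : OrthonormalBasis κ ℝ V) :
    ∑ i, B (b i) (b i) = ∑ j, B (c j) (c j) := by
  calc ∑ i, B (b i) (b i) = ∑ i, ∑ j, ⟪c j, b i⟫ * B (b i) (c j) := by
        refine Finset.sum_congr rfl fun i _ => ?_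
        nth_rewrite 2 [← c.sum_repr' (b i)]
        simp
    _ = ∑ j, B (∑ i, ⟪b i, c j⟫ • b i) (c j) := by
        rw [Finset.sum_comm]
        simp [real_inner_comm]
    _ = ∑ j, B (c j) (c j) := by simp only [b.sum_repr']

theorem OrthonormalBasis.sum_inner_mul_apply_s12 {ι : Type*} [Fintype ι]
    (b : OrthonormalBasis ι ℝ V) (f : V →ₗ[ℝ] ℝ) (Y : V) :
    ∑ i, ⟪b i, Y⟫ * f (b i) = f Y := by
  conv_rhs => rw [← b.sum_repr' Y]
  simp

def transversalRescale (ξ : V) (s : ℝ) (Y : V) : V :=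
  s • Y + ((1 - s) * ⟪ξ, Y⟫) • ξ

variable {ξ : V} {s : ℝ}

theorem inner_transversalRescale (hξ : ⟪ξ, ξ⟫ = 1) (Y Z : V) :
    ⟪transversalRescale ξ s Y, transversalRescale ξ s Z⟫
      = s * s * ⟪Y, Z⟫ + (1 - s * s) * (⟪ξ, Y⟫ * ⟪ξ, Z⟫) := by
  simp only [transversalRescale, inner_add_left, inner_add_right, real_inner_smul_left,
    real_inner_smul_right, hξ, real_inner_comm Y ξ]
  ring

theorem inner_transversalRescale_of_inner_eq_zero {W : V} (hW : ⟪W, ξ⟫ = 0) (Y : V) :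
    ⟪W, transversalRescale ξ s Y⟫ = s * ⟪W, Y⟫ := by
  simp [transversalRescale, inner_add_right, real_inner_smul_right, hW]

theorem LinearMap.map_transversalRescale {W : Type*} [AddCommGroup W] [Module ℝ W]
    (f : V →ₗ[ℝ] W) (hf : f ξ = 0) (Y : V) :
    f (transversalRescale ξ s Y) = s • f Y := by
  simp [transversalRescale, hf]

theorem orthonormal_transversalRescale {ι : Type*} [DecidableEq ι] (hξ : ⟪ξ, ξ⟫ = 1) {v : ι → V}
    (hv : ∀ i j, s * s * ⟪v i, v j⟫ + (1 - s * s) * (⟪ξ, v i⟫ * ⟪ξ, v j⟫)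
      = if i = j then 1 else 0) :
    Orthonormal ℝ (transversalRescale ξ s ∘ v) := by
  rw [orthonormal_iff_ite]
  intro i j
  simp only [Function.comp_apply, inner_transversalRescale hξ, hv]

theorem AlternatingMap.apply_transversalRescale (γ : V [⋀^Fin 3]→ₗ[ℝ] ℝ)
    (hγξ : ∀ Y Z : V, γ ![ξ, Y, Z] = 0) (X Y Z : V) :
    γ ![X, transversalRescale ξ s Y, Z] = s * γ ![X, Y, Z] := by
  have hξ : γ.toBilinTail X ξ = 0 := LinearMap.ext fun Z => by
    rw [toBilinTail_apply, apply_eq_neg_apply_swap, hγξ, neg_zero, LinearMap.zero_apply]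
  simpa using congr($((γ.toBilinTail X).map_transversalRescale hξ Y) Z)

theorem AlternatingMap.apply_transversalRescale_map (γ : V [⋀^Fin 3]→ₗ[ℝ] ℝ)
    (hγξ : ∀ Y Z : V, γ ![ξ, Y, Z] = 0) {φ : V →ₗ[ℝ] V} (hφξ : φ ξ = 0) (X Y : V) :
    γ ![X, transversalRescale ξ s Y, φ (transversalRescale ξ s Y)]
      = s * s * γ ![X, Y, φ Y] := by
  rw [γ.apply_transversalRescale hγξ, φ.map_transversalRescale hφξ, ← toBilinTail_apply,
    map_smul, toBilinTail_apply, smul_eq_mul, mul_assoc]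

structure IsAlmostContactMetric_s12 (ξ : V) (φ : V →ₗ[ℝ] V) : Prop where
  inner_self : ⟪ξ, ξ⟫ = 1
  map_self : φ ξ = 0
  map_map : ∀ X, φ (φ X) = -X + ⟪ξ, X⟫ • ξ
  inner_map_map : ∀ X Y, ⟪φ X, φ Y⟫ = ⟪X, Y⟫ - ⟪ξ, X⟫ * ⟪ξ, Y⟫

/-- `(l ∧ F)(X, Y, Z)` for the fundamental 2-form `F(Y, Z) = ⟪φ Y, Z⟫`. -/
def wedgeFundamental (l : V →ₗ[ℝ] ℝ) (φ : V →ₗ[ℝ] V) (X Y Z : V) : ℝ :=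
  l X * ⟪φ Y, Z⟫ - l Y * ⟪φ X, Z⟫ + l Z * ⟪φ X, Y⟫

namespace IsAlmostContactMetric_s12

variable {φ : V →ₗ[ℝ] V} {l : V →ₗ[ℝ] ℝ}

theorem inner_map_right (h : IsAlmostContactMetric_s12 ξ φ) (Y : V) : ⟪ξ, φ Y⟫ = 0 := by
  have hφ3 : φ (φ (φ Y)) = -φ Y := by simp [h.map_map Y, h.map_self]
  have hηφ2 : ⟪ξ, φ (φ (φ Y))⟫ = 0 := by
    rw [h.map_map, inner_add_right, inner_neg_right, real_inner_smul_right, h.inner_self]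
    ring
  simpa [hφ3] using hηφ2

theorem inner_map_left_s12 (h : IsAlmostContactMetric_s12 ξ φ) (Y : V) : ⟪φ Y, ξ⟫ = 0 := by
  rw [real_inner_comm, h.inner_map_right]

theorem sum_inner_map_self (h : IsAlmostContactMetric_s12 ξ φ) {ι : Type*} [Fintype ι]
    (b : OrthonormalBasis ι ℝ V) :
    ∑ i, ⟪φ (b i), φ (b i)⟫ = Fintype.card ι - 1 := by
  have hξ := b.sum_inner_mul_inner ξ ξ
  simp only [real_inner_comm ξ, h.inner_self] at hξ
  simp only [h.inner_map_map, Finset.sum_sub_distrib, hξ]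
  simp [b.orthonormal.norm_eq_one]

theorem sum_wedgeFundamental (h : IsAlmostContactMetric_s12 ξ φ) (hl : l ξ = 0) {ι : Type*}
    [Fintype ι] (b : OrthonormalBasis ι ℝ V) (X : V) :
    ∑ i, wedgeFundamental l φ X (b i) (φ (b i)) = (Fintype.card ι - 3) * l X := by
  have hF : ∑ i, l (b i) * ⟪φ X, φ (b i)⟫ = l X := by
    calc ∑ i, l (b i) * ⟪φ X, φ (b i)⟫
        = ∑ i, ⟪b i, X⟫ * l (b i) - ⟪ξ, X⟫ * ∑ i, ⟪b i, ξ⟫ * l (b i) := by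
          rw [Finset.mul_sum, ← Finset.sum_sub_distrib]
          refine Finset.sum_congr rfl fun i _ => ?_
          rw [h.inner_map_map, real_inner_comm X (b i), real_inner_comm ξ (b i)]
          ring
      _ = l X := by rw [b.sum_inner_mul_apply_s12, b.sum_inner_mul_apply_s12, hl, mul_zero, sub_zero]
  have hφF : ∑ i, l (φ (b i)) * ⟪φ X, b i⟫ = -l X := by
    calc ∑ i, l (φ (b i)) * ⟪φ X, b i⟫ = (l ∘ₗ φ) (φ X) := by
          rw [← b.sum_inner_mul_apply_s12]
          simp [real_inner_comm, mul_comm]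
      _ = -l X := by simp [h.map_map, hl]
  simp only [wedgeFundamental, Finset.sum_add_distrib, Finset.sum_sub_distrib, ← Finset.mul_sum,
    h.sum_inner_map_self, hF, hφF]
  ring

theorem wedgeFundamental_transversalRescale (h : IsAlmostContactMetric_s12 ξ φ) (hl : l ξ = 0)
    (X Y : V) :
    wedgeFundamental l φ X (transversalRescale ξ s Y) (φ (transversalRescale ξ s Y))
      = s * s * wedgeFundamental l φ X Y (φ Y) := by
  simp only [wedgeFundamental, φ.map_transversalRescale h.map_self,
    l.map_transversalRescale hl, inner_transversalRescale_of_inner_eq_zero (h.inner_map_left_s12 X),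
    real_inner_smul_left, real_inner_smul_right, map_smul, smul_eq_mul]
  ring

end IsAlmostContactMetric_s12

end InnerProductSpace

/-- Transformation rule for the Lee form under a transversal conformal
transformation: with `g̃ = t·g + (1−t)η⊗η`, a horizontal 3-form `γ` and a
horizontal functional `λ`, for any `g̃`-orthonormal basis `ẽ` and any
`g`-orthonormal basis `e`,
`½ Σᵢ (t·γ + t·λ∧F)(X, ẽᵢ, φẽᵢ) = ½ Σᵢ γ(X, eᵢ, φeᵢ) + ((n−3)/2)·λ(X)`. -/
theorem stmt_12 {V : Type*} [NormedAddCommGroup V] [InnerProductSpace ℝ V]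
    [FiniteDimensional ℝ V]
    (ξ : V) (φ : V →ₗ[ℝ] V)
    (hξ : ⟪ξ, ξ⟫ = 1) (hφξ : φ ξ = 0)
    (hφ2 : ∀ X : V, φ (φ X) = -X + ⟪ξ, X⟫ • ξ)
    (hφg : ∀ X Y : V, ⟪φ X, φ Y⟫ = ⟪X, Y⟫ - ⟪ξ, X⟫ * ⟪ξ, Y⟫)
    (t : ℝ) (ht : 0 < t)
    (γ : V [⋀^Fin 3]→ₗ[ℝ] ℝ) (hγξ : ∀ Y Z : V, γ ![ξ, Y, Z] = 0)
    (l : V →ₗ[ℝ] ℝ) (hlξ : l ξ = 0)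
    (n : ℕ) (hn : Module.finrank ℝ V = n)
    (et : Module.Basis (Fin n) ℝ V)
    (het : ∀ i j, t * ⟪et i, et j⟫ + (1 - t) * (⟪ξ, et i⟫ * ⟪ξ, et j⟫)
      = if i = j then 1 else 0)
    (e : OrthonormalBasis (Fin n) ℝ V) :
    ∀ X : V,
      (1 / 2 : ℝ) * ∑ i,
        (t * γ ![X, et i, φ (et i)]
          + t * (l X * ⟪φ (et i), φ (et i)⟫ - l (et i) * ⟪φ X, φ (et i)⟫
              + l (φ (et i)) * ⟪φ X, et i⟫))
      = (1 / 2 : ℝ) * ∑ i, γ ![X, e i, φ (e i)] + (((n : ℝ) - 3) / 2) * l X := by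
  intro X
  have hacm : IsAlmostContactMetric_s12 ξ φ := ⟨hξ, hφξ, hφ2, hφg⟩
  have hs : √t * √t = t := Real.mul_self_sqrt ht.le
  have horth : Orthonormal ℝ (transversalRescale ξ √t ∘ et) :=
    orthonormal_transversalRescale hξ (by simpa only [hs] using het)
  let b : OrthonormalBasis (Fin n) ℝ V := .mk horth
    (horth.linearIndependent.span_eq_top_of_card_eq_finrank' (by simp [hn])).ge
  have hsummand : ∀ i, t * γ ![X, et i, φ (et i)] + t * wedgeFundamental l φ X (et i) (φ (et i))
      = γ ![X, b i, φ (b i)] + wedgeFundamental l φ X (b i) (φ (b i)) := fun i => by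
    simp only [b, OrthonormalBasis.coe_mk, Function.comp_apply,
      γ.apply_transversalRescale_map hγξ hφξ, hacm.wedgeFundamental_transversalRescale hlξ, hs]
  have htrace : ∑ i, γ ![X, b i, φ (b i)] = ∑ i, γ ![X, e i, φ (e i)] :=
    b.sum_bilin_diag_eq ((γ.toBilinTail X).compl₂ φ) e
  calc _ = (1 / 2 : ℝ) * ∑ i, (γ ![X, b i, φ (b i)] + wedgeFundamental l φ X (b i) (φ (b i))) :=
        congrArg _ (Finset.sum_congr rfl fun i _ => hsummand i)
    _ = _ := by
        rw [Finset.sum_add_distrib, hacm.sum_wedgeFundamental hlξ, htrace, Fintype.card_fin]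
        ring
end

section
/- Let (ξ, η, φ) be an almost contact metric structure on the finite-dimensional real inner product space (V, ⟨·,·⟩), and on W = ℝ × V define J(t, X) = (−η(X), t·ξ + φ(X)) and e⁰(t,X) = t. Let β be an alternating 2-form on V with ι_ξβ = 0 and β(φX, φY) = β(X,Y) for all X, Y, and let γ be an alternating 3-form on V with ι_ξγ = 0; regard β, γ, η as forms on W via the projection W → V. Then the 3-form Γ := −e⁰∧β + γ on W satisfies Γ(Jw₁, Jw₂, Jw₃) = (η∧β + γ(φ·, φ·, φ·))(w₁, w₂, w₃) for all w₁, w₂, w₃ ∈ W. (Taking β = dη and γ = dF, this computes the torsion 3-form of the KT cylinder over a Sasaki-with-torsion manifold: dω_K(J·,J·,J·) = η∧dη + d^φF.) -/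
/-!
Since `ι_ξβ = 0` and `ι_ξγ = 0`, multilinearity makes `β` and `γ` blind to the `ξ`-components
of the vectors `(J w).2 = t ξ + φ X`, so only the `φ X` survive. The `ℝ`-component `−η(X)` of
`J w` turns `−e⁰ ∧ β` into `η ∧ β`, and `β(φ·, φ·) = β` removes the remaining `φ`'s.
-/

open RealInnerProductSpace

/-- The almost complex structure `J(t,X) = (−η(X), t·ξ + φ(X))` of the cylinder
`ℝ × V` over an almost contact metric structure `(ξ, η, φ)` on `V`. -/
noncomputable def Jcyl {V : Type*} [NormedAddCommGroup V] [InnerProductSpace ℝ V]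
    (ξ : V) (φ : V →ₗ[ℝ] V) : ℝ × V → ℝ × V :=
  fun p => (-⟪ξ, p.2⟫, p.1 • ξ + φ p.2)

namespace AlternatingMap

variable {R M N ι : Type*} [CommRing R] [AddCommGroup M] [Module R M]
  [AddCommGroup N] [Module R N]

theorem map_update_eq_zero_of_map_vecCons_eq_zero {n : ℕ} (f : M [⋀^Fin (n + 1)]→ₗ[R] N)
    {ξ : M} (hξ : ∀ v : Fin n → M, f (Matrix.vecCons ξ v) = 0) (v : Fin (n + 1) → M)
    (i : Fin (n + 1)) : f (Function.update v i ξ) = 0 := by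
  rcases eq_or_ne i 0 with rfl | hi
  · rw [← Fin.cons_self_tail (Function.update v 0 ξ), Function.update_self]
    exact hξ _
  · have hξ0 : (Function.update v i ξ ∘ Equiv.swap i 0) 0 = ξ := by simp
    rw [← neg_eq_zero, ← f.map_swap _ hi, ← Fin.cons_self_tail (_ ∘ _), hξ0]
    exact hξ _

theorem map_smul_add_eq_of_map_update_eq_zero [Fintype ι] [DecidableEq ι]
    (f : M [⋀^ι]→ₗ[R] N) {ξ : M} (hξ : ∀ (v : ι → M) (i : ι), f (Function.update v i ξ) = 0)
    (c : ι → R) (v : ι → M) : f (fun i => c i • ξ + v i) = f v := by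
  -- Expanding over the slots, every term except `f v` has some slot equal to a multiple of `ξ`.
  change f ((fun i => c i • ξ) + v) = f v
  rw [add_comm, f.map_add_univ, Finset.sum_eq_single Finset.univ]
  · simp
  · intro s _ hs
    obtain ⟨i, -, hi⟩ := Finset.exists_of_ssubset (Finset.ssubset_univ_iff.mpr hs)
    rw [← Function.update_eq_self i (s.piecewise _ _), Finset.piecewise_eq_of_notMem _ _ _ hi,
      f.map_update_smul, hξ, smul_zero]
  · simp

theorem map_smul_add_eq_of_map_vecCons_eq_zero {n : ℕ} (f : M [⋀^Fin (n + 1)]→ₗ[R] N)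
    {ξ : M} (hξ : ∀ v : Fin n → M, f (Matrix.vecCons ξ v) = 0) (c : Fin (n + 1) → R)
    (v : Fin (n + 1) → M) : f (fun i => c i • ξ + v i) = f v :=
  f.map_smul_add_eq_of_map_update_eq_zero (f.map_update_eq_zero_of_map_vecCons_eq_zero hξ) c v

end AlternatingMap

theorem stmt_14_general {V : Type*} [NormedAddCommGroup V] [InnerProductSpace ℝ V]
    (ξ : V) (φ : V →ₗ[ℝ] V)
    (β : V [⋀^Fin 2]→ₗ[ℝ] ℝ) (γ : V [⋀^Fin 3]→ₗ[ℝ] ℝ)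
    (hβξ : ∀ Y : V, β ![ξ, Y] = 0)
    (hβ11 : ∀ X Y : V, β ![φ X, φ Y] = β ![X, Y])
    (hγξ : ∀ Y Z : V, γ ![ξ, Y, Z] = 0) :
    ∀ w₁ w₂ w₃ : ℝ × V,
      -((Jcyl ξ φ w₁).1 * β ![(Jcyl ξ φ w₂).2, (Jcyl ξ φ w₃).2]
          - (Jcyl ξ φ w₂).1 * β ![(Jcyl ξ φ w₁).2, (Jcyl ξ φ w₃).2]
          + (Jcyl ξ φ w₃).1 * β ![(Jcyl ξ φ w₁).2, (Jcyl ξ φ w₂).2])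
        + γ ![(Jcyl ξ φ w₁).2, (Jcyl ξ φ w₂).2, (Jcyl ξ φ w₃).2]
      = ⟪ξ, w₁.2⟫ * β ![w₂.2, w₃.2] - ⟪ξ, w₂.2⟫ * β ![w₁.2, w₃.2]
          + ⟪ξ, w₃.2⟫ * β ![w₁.2, w₂.2]
        + γ ![φ w₁.2, φ w₂.2, φ w₃.2] := by
  have hβ : ∀ (a b : ℝ) (X Y : V), β ![a • ξ + X, b • ξ + Y] = β ![X, Y] := fun a b X Y => by
    convert β.map_smul_add_eq_of_map_vecCons_eq_zero (by simpa [Fin.forall_fin_succ_pi])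
      ![a, b] ![X, Y] using 2
    ext i; fin_cases i <;> rfl
  have hγ : ∀ (a b c : ℝ) (X Y Z : V),
      γ ![a • ξ + X, b • ξ + Y, c • ξ + Z] = γ ![X, Y, Z] := fun a b c X Y Z => by
    convert γ.map_smul_add_eq_of_map_vecCons_eq_zero (by simpa [Fin.forall_fin_succ_pi])
      ![a, b, c] ![X, Y, Z] using 2
    ext i; fin_cases i <;> rfl
  intro w₁ w₂ w₃
  simp only [Jcyl, hβ, hγ, hβ11]
  ring

/-- Torsion of the KT cylinder: for `Γ = −e⁰∧β + γ` on `W = ℝ × V` (with `β`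
a horizontal `(1,1)`-form and `γ` a horizontal 3-form on `V`, pulled back to
`W`), one has `Γ(J·, J·, J·) = η∧β + γ(φ·, φ·, φ·)`. -/
theorem stmt_14 {V : Type*} [NormedAddCommGroup V] [InnerProductSpace ℝ V]
    [FiniteDimensional ℝ V]
    (ξ : V) (φ : V →ₗ[ℝ] V)
    (hξ : ⟪ξ, ξ⟫ = 1) (hφξ : φ ξ = 0)
    (hφ2 : ∀ X : V, φ (φ X) = -X + ⟪ξ, X⟫ • ξ)
    (hφg : ∀ X Y : V, ⟪φ X, φ Y⟫ = ⟪X, Y⟫ - ⟪ξ, X⟫ * ⟪ξ, Y⟫)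
    (β : V [⋀^Fin 2]→ₗ[ℝ] ℝ) (γ : V [⋀^Fin 3]→ₗ[ℝ] ℝ)
    (hβξ : ∀ Y : V, β ![ξ, Y] = 0)
    (hβ11 : ∀ X Y : V, β ![φ X, φ Y] = β ![X, Y])
    (hγξ : ∀ Y Z : V, γ ![ξ, Y, Z] = 0) :
    ∀ w₁ w₂ w₃ : ℝ × V,
      -((Jcyl ξ φ w₁).1 * β ![(Jcyl ξ φ w₂).2, (Jcyl ξ φ w₃).2]
          - (Jcyl ξ φ w₂).1 * β ![(Jcyl ξ φ w₁).2, (Jcyl ξ φ w₃).2]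
          + (Jcyl ξ φ w₃).1 * β ![(Jcyl ξ φ w₁).2, (Jcyl ξ φ w₂).2])
        + γ ![(Jcyl ξ φ w₁).2, (Jcyl ξ φ w₂).2, (Jcyl ξ φ w₃).2]
      = ⟪ξ, w₁.2⟫ * β ![w₂.2, w₃.2] - ⟪ξ, w₂.2⟫ * β ![w₁.2, w₃.2]
          + ⟪ξ, w₃.2⟫ * β ![w₁.2, w₂.2]
        + γ ![φ w₁.2, φ w₂.2, φ w₃.2] :=
  stmt_14_general ξ φ β γ hβξ hβ11 hγξ
end

section
/- Let (ξ, η, φ) be an almost contact metric structure on the finite-dimensional real inner product space (V, ⟨·,·⟩), and let s, t ∈ ℝ with s² + t² = 1. On Ŵ = ℝ² ⊕ V with the inner product ⟨(a,b,X),(a',b',X')⟩_Ŵ = aa' + bb' + ⟨X,X'⟩, set ξ̂ = (t, s, 0), ξ̂⊥ = (−s, t, 0), η̂(w) = ⟨ξ̂, w⟩_Ŵ, η̂⊥(w) = ⟨ξ̂⊥, w⟩_Ŵ, and define φ̂(a,b,X) = η̂⊥(a,b,X)·(0,0,ξ) − η(X)·ξ̂⊥ + (0,0,φ(X)). Then (ξ̂,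 η̂, φ̂) is an almost contact metric structure on (Ŵ, ⟨·,·⟩_Ŵ): φ̂(ξ̂) = 0, φ̂∘φ̂ = −id + η̂(·)ξ̂, and ⟨φ̂(w), φ̂(w')⟩_Ŵ = ⟨w, w'⟩_Ŵ − η̂(w)η̂(w') for all w, w' ∈ Ŵ. (This is the pointwise core of the proposition constructing a family of Sasaki-with-torsion structures on a two-torus bundle over a normal almost contact metric manifold.) -/
open RealInnerProductSpace

/-- The almost contact endomorphism `φ̂` on `Ŵ = ℝ² ⊕ V` used in the torus-bundle
construction of ST structures:
`φ̂(a,b,X) = η̂⊥(a,b,X)·(0,0,ξ) − η(X)·ξ̂⊥ + (0,0,φX)`. -/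
noncomputable def phiHat {V : Type*} [NormedAddCommGroup V] [InnerProductSpace ℝ V]
    (ξ : V) (φ : V →ₗ[ℝ] V) (s t : ℝ) : ℝ × ℝ × V → ℝ × ℝ × V :=
  fun w => (-s * w.1 + t * w.2.1) • ((0 : ℝ), (0 : ℝ), ξ)
    - ⟪ξ, w.2.2⟫ • (-s, t, (0 : V)) + ((0 : ℝ), (0 : ℝ), φ w.2.2)

section AlmostContact

variable {V : Type*} [NormedAddCommGroup V] [InnerProductSpace ℝ V] (ξ : V) (φ : V →ₗ[ℝ] V)

theorem phiHat_apply (s t : ℝ) (w : ℝ × ℝ × V) :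
    phiHat ξ φ s t w
      = (s * ⟪ξ, w.2.2⟫, -t * ⟪ξ, w.2.2⟫, (-s * w.1 + t * w.2.1) • ξ + φ w.2.2) := by
  ext <;> simp [phiHat] <;> ring

theorem phiHat_xiHat (s t : ℝ) : phiHat ξ φ s t (t, s, 0) = 0 := by
  simp [phiHat_apply, mul_comm t s]

variable {ξ φ}

theorem inner_apply_eq_zero_of_almostContact (hξ : ⟪ξ, ξ⟫ = 1) (hφξ : φ ξ = 0)
    (hφ2 : ∀ X : V, φ (φ X) = -X + ⟪ξ, X⟫ • ξ) (X : V) : ⟪ξ, φ X⟫ = 0 := by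
  -- Compute `φ³ X` in two ways: as `φ (φ² X) = -φ X` and as `φ² (φ X) = -φ X + η(φ X) ξ`.
  have hcube := hφ2 (φ X)
  rw [hφ2 X, map_add, map_neg, map_smul, hφξ, smul_zero, add_zero] at hcube
  have hξ0 : ξ ≠ 0 := fun h => by simp [h] at hξ
  exact (smul_eq_zero.mp (left_eq_add.mp hcube)).resolve_right hξ0

theorem phiHat_phiHat (hξ : ⟪ξ, ξ⟫ = 1) (hφξ : φ ξ = 0)
    (hφ2 : ∀ X : V, φ (φ X) = -X + ⟪ξ, X⟫ • ξ) {s t : ℝ} (hst : s ^ 2 + t ^ 2 = 1)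
    (w : ℝ × ℝ × V) :
    phiHat ξ φ s t (phiHat ξ φ s t w) = -w + (t * w.1 + s * w.2.1) • (t, s, (0 : V)) := by
  obtain ⟨a, b, X⟩ := w
  simp only [phiHat_apply, inner_add_right, real_inner_smul_right, hξ,
    inner_apply_eq_zero_of_almostContact hξ hφξ hφ2, map_add, map_smul, hφξ, hφ2]
  ext
  · simp only [Prod.fst_add, Prod.fst_neg, Prod.smul_fst, smul_eq_mul]
    linear_combination (-a) * hst
  · simp only [Prod.snd_add, Prod.fst_add, Prod.snd_neg, Prod.fst_neg, Prod.smul_snd,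
      Prod.smul_fst, smul_eq_mul]
    linear_combination (-b) * hst
  · simp only [Prod.snd_add, Prod.snd_neg, Prod.smul_snd, smul_zero, add_zero]
    rw [show -s * (s * ⟪ξ, X⟫) + t * (-t * ⟪ξ, X⟫) = -⟪ξ, X⟫ by
      linear_combination (-⟪ξ, X⟫) * hst]
    module

theorem phiHat_inner_phiHat (hξ : ⟪ξ, ξ⟫ = 1) (hηφ : ∀ X : V, ⟪ξ, φ X⟫ = 0)
    (hφg : ∀ X Y : V, ⟪φ X, φ Y⟫ = ⟪X, Y⟫ - ⟪ξ, X⟫ * ⟪ξ, Y⟫) {s t : ℝ}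
    (hst : s ^ 2 + t ^ 2 = 1) (w w' : ℝ × ℝ × V) :
    (phiHat ξ φ s t w).1 * (phiHat ξ φ s t w').1
        + (phiHat ξ φ s t w).2.1 * (phiHat ξ φ s t w').2.1
        + ⟪(phiHat ξ φ s t w).2.2, (phiHat ξ φ s t w').2.2⟫
      = (w.1 * w'.1 + w.2.1 * w'.2.1 + ⟪w.2.2, w'.2.2⟫)
        - (t * w.1 + s * w.2.1) * (t * w'.1 + s * w'.2.1) := by
  have hφη : ∀ X : V, ⟪φ X, ξ⟫ = 0 := fun X => by rw [real_inner_comm, hηφ]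
  simp only [phiHat_apply, inner_add_left, inner_add_right, real_inner_smul_left,
    real_inner_smul_right, hξ, hηφ, hφη, hφg]
  linear_combination (⟪ξ, w.2.2⟫ * ⟪ξ, w'.2.2⟫ + w.1 * w'.1 + w.2.1 * w'.2.1) * hst

end AlmostContact

theorem stmt_17_general {V : Type*} [NormedAddCommGroup V] [InnerProductSpace ℝ V]
    (ξ : V) (φ : V →ₗ[ℝ] V)
    (hξ : ⟪ξ, ξ⟫ = 1) (hφξ : φ ξ = 0)
    (hφ2 : ∀ X : V, φ (φ X) = -X + ⟪ξ, X⟫ • ξ)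
    (hφg : ∀ X Y : V, ⟪φ X, φ Y⟫ = ⟪X, Y⟫ - ⟪ξ, X⟫ * ⟪ξ, Y⟫)
    (s t : ℝ) (hst : s ^ 2 + t ^ 2 = 1) :
    (t * t + s * s + ⟪(0 : V), (0 : V)⟫ = 1) ∧
    phiHat ξ φ s t (t, s, (0 : V)) = 0 ∧
    (∀ w : ℝ × ℝ × V,
      phiHat ξ φ s t (phiHat ξ φ s t w)
        = -w + (t * w.1 + s * w.2.1) • ((t, s, (0 : V)) : ℝ × ℝ × V)) ∧
    (∀ w w' : ℝ × ℝ × V,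
      (phiHat ξ φ s t w).1 * (phiHat ξ φ s t w').1
          + (phiHat ξ φ s t w).2.1 * (phiHat ξ φ s t w').2.1
          + ⟪(phiHat ξ φ s t w).2.2, (phiHat ξ φ s t w').2.2⟫
        = (w.1 * w'.1 + w.2.1 * w'.2.1 + ⟪w.2.2, w'.2.2⟫)
          - (t * w.1 + s * w.2.1) * (t * w'.1 + s * w'.2.1)) :=
  ⟨by rw [inner_zero_left]; linear_combination hst,
    phiHat_xiHat ξ φ s t,
    phiHat_phiHat hξ hφξ hφ2 hst,
    phiHat_inner_phiHat hξ (inner_apply_eq_zero_of_almostContact hξ hφξ hφ2) hφg hst⟩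

/-- Pointwise core of the torus-bundle construction: with `s² + t² = 1`, the
triple `(ξ̂, η̂, φ̂)`, where `ξ̂ = (t,s,0)` and `η̂ = ⟨ξ̂, ·⟩_Ŵ`, is an almost
contact metric structure on `Ŵ = ℝ² ⊕ V` with the product inner product
`⟨(a,b,X),(a',b',X')⟩_Ŵ = aa' + bb' + ⟨X,X'⟩`. -/
theorem stmt_17 {V : Type*} [NormedAddCommGroup V] [InnerProductSpace ℝ V]
    [FiniteDimensional ℝ V]
    (ξ : V) (φ : V →ₗ[ℝ] V)
    (hξ : ⟪ξ, ξ⟫ = 1) (hφξ : φ ξ = 0)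
    (hφ2 : ∀ X : V, φ (φ X) = -X + ⟪ξ, X⟫ • ξ)
    (hφg : ∀ X Y : V, ⟪φ X, φ Y⟫ = ⟪X, Y⟫ - ⟪ξ, X⟫ * ⟪ξ, Y⟫)
    (s t : ℝ) (hst : s ^ 2 + t ^ 2 = 1) :
    (t * t + s * s + ⟪(0 : V), (0 : V)⟫ = 1) ∧
    phiHat ξ φ s t (t, s, (0 : V)) = 0 ∧
    (∀ w : ℝ × ℝ × V,
      phiHat ξ φ s t (phiHat ξ φ s t w)
        = -w + (t * w.1 + s * w.2.1) • ((t, s, (0 : V)) : ℝ × ℝ × V)) ∧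
    (∀ w w' : ℝ × ℝ × V,
      (phiHat ξ φ s t w).1 * (phiHat ξ φ s t w').1
          + (phiHat ξ φ s t w).2.1 * (phiHat ξ φ s t w').2.1
          + ⟪(phiHat ξ φ s t w).2.2, (phiHat ξ φ s t w').2.2⟫
        = (w.1 * w'.1 + w.2.1 * w'.2.1 + ⟪w.2.2, w'.2.2⟫)
          - (t * w.1 + s * w.2.1) * (t * w'.1 + s * w'.2.1)) :=
  stmt_17_general ξ φ hξ hφξ hφ2 hφg s t hst
end
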